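/- arXiv:1508.06593 — 2 statements merged into one kernel-verified Lean document; each statement's English description precedes it below -/
import Mathlib

section
/- Let a be a semi-integer (2a ∈ ℤ, a ≠ 0) and let x be an (n−2)-dimensional central configuration for the potential U_a with positive masses m_1, …, m_n and multiplier λ, normalized so that λ/M = 1 (i.e. r_0 = 1). Then there exist complex numbers z_1, …, z_n and Δ_0, which are either all real or all purely imaginary, with at least two of the z_i nonzero, such that: (i) r_{ij}^{2a} − 1 − z_i z_j = 0 for all 1 ≤ i < j ≤ n; (ii) det A(x) = 0; (iii) ∑_{j=1}^n m_j z_j = 0 and Δ_0 + ∑_{j=1}^n m_j z_j r_{jl}² = 0 for every l = 1, …, n (with r_{ll} = 0). Moreover, the tuple (z_1, …, z_n, Δ_0) is unique up to replacing it by (−z_1, …, −z_n, −Δ_0). -/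
/-!
Since the `n` points span an `(n - 2)`-dimensional space, their affine dependencies
(`Δ` with `∑ Δᵢ = 0` and `∑ Δᵢ xᵢ = 0`) form a line `ℝ Δ`. For such `Δ` the sum
`∑ⱼ Δⱼ rⱼₗ²` does not depend on `l`, which puts `(-∑ Δⱼ ‖xⱼ‖², Δ)` in the kernel of the
Cayley–Menger matrix. When `λ = M`, the equation of body `j` says that the weights
`mᵢ (rᵢⱼ^{2a} - 1)`, corrected at `i = j`, are an affine dependency, hence a multiple of `Δ`;
symmetry in `i, j` then gives `mᵢ mⱼ (rᵢⱼ^{2a} - 1) = β Δᵢ Δⱼ`. Here `β ≠ 0`, as otherwise all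
`rᵢⱼ = 1` and a regular simplex has no affine dependency. With `s² = β` (so `s` is real or
purely imaginary), `zᵢ = s Δᵢ / mᵢ` and `Δ₀ = -s ∑ Δⱼ ‖xⱼ‖²` solve the system. Conversely,
multiplying `∑ mⱼ zⱼ = 0` by `z_a` expresses `m_a z_a²` through the products `z_a zⱼ`, so
these products determine `z` up to sign, and `z` determines `Δ₀`.
-/

/-- The dimension of a configuration: the dimension of the smallest affine
subspace containing the points. -/
noncomputable def confDim {d n : ℕ} (x : Fin n → EuclideanSpace ℝ (Fin d)) : ℕ :=
  Module.finrank ℝ (affineSpan ℝ (Set.range x)).direction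

/-- `x` is a central configuration for the potential `U_a` (with `c2 = 2a ∈ ℤ`),
masses `m`, and multiplier `lam`. -/
def IsCentralConfig {d n : ℕ} (c2 : ℤ) (m : Fin n → ℝ) (lam : ℝ)
    (x : Fin n → EuclideanSpace ℝ (Fin d)) : Prop :=
  ∀ j : Fin n,
    (∑ i ∈ Finset.univ \ {j}, (m i * dist (x i) (x j) ^ c2) • (x i - x j))
      + lam • (x j - (∑ i, m i)⁻¹ • ∑ i, m i • x i) = 0

/-- The Cayley–Menger matrix of a configuration. -/
noncomputable def cayleyMenger {n d : ℕ} (x : Fin n → EuclideanSpace ℝ (Fin d)) :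
    Matrix (Fin (n + 1)) (Fin (n + 1)) ℝ :=
  Matrix.of fun i j =>
    Fin.cases (Fin.cases 0 (fun _ => 1) j)
      (fun i' => Fin.cases 1 (fun j' => dist (x i') (x j') ^ 2) j) i

section AffineDependencies

variable (k : Type*) {E ι : Type*} [Field k] [AddCommGroup E] [Module k E]

noncomputable def affineDependencies [Fintype ι] (x : ι → E) : Submodule k (ι → k) :=
  LinearMap.ker (Fintype.linearCombination k fun i => ((1 : k), x i))

variable {k}

theorem span_range_one_prod_eq (x : ι → E) (i₀ : ι) :
    Submodule.span k (Set.range fun i => ((1 : k), x i)) =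
      (vectorSpan k (Set.range x)).map (LinearMap.inr k k E) ⊔ k ∙ ((1 : k), x i₀) := by
  apply le_antisymm
  · rw [Submodule.span_le]
    rintro _ ⟨i, rfl⟩
    have hvsub : x i -ᵥ x i₀ ∈ vectorSpan k (Set.range x) :=
      vsub_mem_vectorSpan k (Set.mem_range_self i) (Set.mem_range_self i₀)
    have hsplit : ((1 : k), x i) = LinearMap.inr k k E (x i -ᵥ x i₀) + ((1 : k), x i₀) := by
      simp
    change ((1 : k), x i) ∈ _
    rw [hsplit]
    exact Submodule.add_mem_sup (Submodule.mem_map_of_mem hvsub)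
      (Submodule.mem_span_singleton_self _)
  · refine sup_le ?_ (Submodule.span_mono (by simp))
    rw [vectorSpan_range_eq_span_range_vsub_right k x i₀, Submodule.map_span, Submodule.span_le]
    rintro _ ⟨_, ⟨i, rfl⟩, rfl⟩
    have hdiff : LinearMap.inr k k E (x i -ᵥ x i₀) = ((1 : k), x i) - ((1 : k), x i₀) := by
      simp
    rw [SetLike.mem_coe, hdiff]
    exact Submodule.sub_mem _ (Submodule.subset_span ⟨i, rfl⟩) (Submodule.subset_span ⟨i₀, rfl⟩)

variable [Fintype ι]

theorem mem_affineDependencies {x : ι → E} {c : ι → k} :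
    c ∈ affineDependencies k x ↔ ∑ i, c i = 0 ∧ ∑ i, c i • x i = 0 := by
  simp [affineDependencies, Fintype.linearCombination_apply, Prod.ext_iff, Prod.fst_sum,
    Prod.snd_sum]

theorem finrank_affineDependencies_add_finrank_vectorSpan [FiniteDimensional k E] [Nonempty ι]
    (x : ι → E) :
    Module.finrank k (affineDependencies k x) + Module.finrank k (vectorSpan k (Set.range x)) + 1
      = Fintype.card ι := by
  obtain ⟨i₀⟩ := ‹Nonempty ι›
  have hlift : ((1 : k), x i₀) ∉ (vectorSpan k (Set.range x)).map (LinearMap.inr k k E) := by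
    rintro ⟨w, -, hw⟩
    simpa using congrArg Prod.fst hw
  have hrange := Submodule.finrank_sup_span_singleton hlift
  rw [← span_range_one_prod_eq, ← Fintype.range_linearCombination,
    ← (Submodule.equivMapOfInjective _ LinearMap.inr_injective _).finrank_eq] at hrange
  rw [add_assoc, ← hrange, add_comm, affineDependencies, LinearMap.finrank_range_add_finrank_ker,
    Module.finrank_fintype_fun_eq_card]

theorem exists_affineDependencies_eq_span_singleton [FiniteDimensional k E] {x : ι → E}
    (hx : Module.finrank k (vectorSpan k (Set.range x)) + 2 = Fintype.card ι) :
    ∃ Δ ≠ 0, affineDependencies k x = k ∙ Δ := by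
  have : Nonempty ι := Fintype.card_pos_iff.mp (by omega)
  have hone : Module.finrank k (affineDependencies k x) = 1 := by
    have := finrank_affineDependencies_add_finrank_vectorSpan (k := k) x
    omega
  have hne_bot : affineDependencies k x ≠ ⊥ := by
    rw [Ne, ← Submodule.finrank_eq_zero (R := k)]
    omega
  obtain ⟨Δ, hΔ, hΔ0⟩ := Submodule.exists_mem_ne_zero_of_ne_bot hne_bot
  exact ⟨Δ, hΔ0, eq_span_singleton_of_mem_of_finrank_eq_one hone hΔ hΔ0⟩

theorem sub_single_sum_mem_affineDependencies [DecidableEq ι] {x : ι → E} {w : ι → k} {j : ι}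
    (h : ∑ i, w i • (x i - x j) = 0) :
    w - Pi.single j (∑ i, w i) ∈ affineDependencies k x := by
  rw [mem_affineDependencies]
  constructor
  · simp [Finset.sum_sub_distrib]
  · simpa [sub_smul, Finset.sum_sub_distrib, smul_sub, Finset.sum_smul] using h

end AffineDependencies

section Euclidean

variable {E ι : Type*} [NormedAddCommGroup E] [InnerProductSpace ℝ E] [Fintype ι]
  {x : ι → E} {Δ : ι → ℝ}

theorem sum_mul_dist_sq_eq (hΔ : Δ ∈ affineDependencies ℝ x) (l : ι) :
    ∑ j, Δ j * dist (x j) (x l) ^ 2 = ∑ j, Δ j * ‖x j‖ ^ 2 := by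
  obtain ⟨hsum, hmoment⟩ := mem_affineDependencies.mp hΔ
  have hexpand : ∀ j, Δ j * dist (x j) (x l) ^ 2
      = Δ j * ‖x j‖ ^ 2 - 2 * inner ℝ (Δ j • x j) (x l) + Δ j * ‖x l‖ ^ 2 := fun j => by
    rw [dist_eq_norm, norm_sub_sq_real, real_inner_smul_left]
    ring
  simp only [hexpand, Finset.sum_add_distrib, Finset.sum_sub_distrib, ← Finset.sum_mul, hsum,
    ← Finset.mul_sum, ← sum_inner, hmoment, inner_zero_left]
  ring

theorem eq_zero_of_mem_affineDependencies_of_dist_eq {r : ℝ} (hr : r ≠ 0)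
    (hdist : ∀ i j, i ≠ j → dist (x i) (x j) = r) (hΔ : Δ ∈ affineDependencies ℝ x) : Δ = 0 := by
  classical
  have hsum := (mem_affineDependencies.mp hΔ).1
  have hrow : ∀ i, ∑ j, Δ j * dist (x j) (x i) ^ 2 = -(r ^ 2 * Δ i) := fun i => by
    have hterm : ∀ j, Δ j * dist (x j) (x i) ^ 2
        = r ^ 2 * Δ j - (Pi.single i (r ^ 2 * Δ i) : ι → ℝ) j := fun j => by
      rcases eq_or_ne j i with rfl | hji
      · simp
      · simp [hdist j i hji, hji, mul_comm]
    simp [hterm, Finset.sum_sub_distrib, ← Finset.mul_sum, hsum]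
  have hsq : r ^ 2 * ∑ i, Δ i * Δ i = 0 :=
    calc r ^ 2 * ∑ i, Δ i * Δ i = -∑ i, Δ i * ∑ j, Δ j * dist (x j) (x i) ^ 2 := by
          simp only [hrow, Finset.mul_sum, mul_neg, Finset.sum_neg_distrib, neg_neg]
          exact Finset.sum_congr rfl fun i _ => by ring
      _ = 0 := by simp [sum_mul_dist_sq_eq hΔ, ← Finset.sum_mul, hsum]
  funext i
  exact (Finset.sum_mul_self_eq_zero_iff _ _).mp ((mul_eq_zero.mp hsq).resolve_left
    (pow_ne_zero 2 hr)) i (Finset.mem_univ i)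

theorem ne_zero_of_offDiag_eq_mul_mul {c2 : ℤ} (hc2 : c2 ≠ 0) {m : ι → ℝ}
    (hm : ∀ i, m i ≠ 0) (hΔ : Δ ∈ affineDependencies ℝ x) (hΔ0 : Δ ≠ 0) {β : ℝ}
    (hβ : ∀ i j, i ≠ j → m i * m j * (dist (x i) (x j) ^ c2 - 1) = β * Δ i * Δ j) : β ≠ 0 := by
  rintro rfl
  refine hΔ0 (eq_zero_of_mem_affineDependencies_of_dist_eq one_ne_zero (fun i j hij => ?_) hΔ)
  have hpow : dist (x i) (x j) ^ c2 = 1 := by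
    have := hβ i j hij
    simp only [zero_mul, mul_eq_zero, hm i, hm j, false_or, sub_eq_zero] at this
    exact this
  by_contra hne
  exact hc2 <| (zpow_eq_one_iff_right₀ dist_nonneg hne).mp hpow

end Euclidean

theorem cayleyMenger_det_eq_zero {n d : ℕ} {x : Fin n → EuclideanSpace ℝ (Fin d)} {Δ : Fin n → ℝ}
    (hΔ : Δ ∈ affineDependencies ℝ x) (hΔ0 : Δ ≠ 0) : (cayleyMenger x).det = 0 := by
  rw [← Matrix.exists_mulVec_eq_zero_iff]
  refine ⟨Fin.cons (-∑ j, Δ j * ‖x j‖ ^ 2) Δ, fun h => hΔ0 (funext fun i => by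
    simpa using congrFun h i.succ), ?_⟩
  funext i
  induction i using Fin.cases with
  | zero => simpa [Matrix.mulVec, dotProduct, Fin.sum_univ_succ, cayleyMenger] using
      (mem_affineDependencies.mp hΔ).1
  | succ i =>
    have hrow := sum_mul_dist_sq_eq hΔ i
    simp only [dist_comm (x _) (x i)] at hrow
    simp [Matrix.mulVec, dotProduct, Fin.sum_univ_succ, cayleyMenger, mul_comm, hrow]

theorem exists_offDiag_eq_mul_mul_of_symm {ι K : Type*} [Field K] {a : ι → ι → K}
    (ha : ∀ i j, a i j = a j i) {t Δ : ι → K} (hΔ : Δ ≠ 0)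
    (h : ∀ i j, i ≠ j → a i j = t j * Δ i) :
    ∃ β : K, ∀ i j, i ≠ j → a i j = β * Δ i * Δ j := by
  have hcross : ∀ i j, t j * Δ i = t i * Δ j := fun i j => by
    rcases eq_or_ne i j with rfl | hij
    · rfl
    · rw [← h i j hij, ← h j i hij.symm, ha]
  obtain ⟨i₀, hi₀⟩ := Function.ne_iff.mp hΔ
  have ht : ∀ j, t j = t i₀ / Δ i₀ * Δ j := fun j => by
    rw [div_mul_eq_mul_div, eq_div_iff hi₀, hcross i₀ j]
  refine ⟨t i₀ / Δ i₀, fun i j hij => ?_⟩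
  rw [h i j hij, ht j]
  ring

section CentralConfig

variable {n d : ℕ} {c2 : ℤ} {m : Fin n → ℝ} {x : Fin n → EuclideanSpace ℝ (Fin d)}

theorem IsCentralConfig.sum_smul_sub_eq_zero (hcc : IsCentralConfig c2 m (∑ i, m i) x)
    (hM : ∑ i, m i ≠ 0) (j : Fin n) :
    ∑ i, (m i * (dist (x i) (x j) ^ c2 - 1)) • (x i - x j) = 0 := by
  have hcenter : (∑ i, m i) • (x j - (∑ i, m i)⁻¹ • ∑ i, m i • x i)
      = -∑ i, m i • (x i - x j) := by
    simp [smul_sub, smul_inv_smul₀ hM, Finset.sum_smul, Finset.sum_sub_distrib]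
  have h := hcc j
  rw [hcenter, Finset.sdiff_singleton_eq_erase,
    Finset.sum_erase (f := fun i => (m i * dist (x i) (x j) ^ c2) • (x i - x j)) _ (by simp)] at h
  simpa [mul_sub, sub_smul, Finset.sum_sub_distrib, ← sub_eq_add_neg] using h

theorem IsCentralConfig.exists_offDiag_eq_mul_mul (hcc : IsCentralConfig c2 m (∑ i, m i) x)
    (hM : ∑ i, m i ≠ 0) {Δ : Fin n → ℝ} (hΔ0 : Δ ≠ 0) (hspan : affineDependencies ℝ x = ℝ ∙ Δ) :
    ∃ β : ℝ, ∀ i j, i ≠ j → m i * m j * (dist (x i) (x j) ^ c2 - 1) = β * Δ i * Δ j := by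
  have hcol : ∀ j, ∃ t : ℝ, t • Δ = (fun i => m i * (dist (x i) (x j) ^ c2 - 1))
      - Pi.single j (∑ i, m i * (dist (x i) (x j) ^ c2 - 1)) := fun j =>
    Submodule.mem_span_singleton.mp <| hspan ▸
      sub_single_sum_mem_affineDependencies (hcc.sum_smul_sub_eq_zero hM j)
  choose t ht using hcol
  refine exists_offDiag_eq_mul_mul_of_symm (t := fun j => m j * t j) (fun i j => by
    rw [dist_comm]; ring) hΔ0 fun i j hij => ?_
  have hentry := congrFun (ht j) i
  simp only [Pi.smul_apply, Pi.sub_apply, Pi.single_eq_of_ne hij, sub_zero, smul_eq_mul]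
    at hentry
  rw [mul_right_comm, ← hentry]
  ring

end CentralConfig

section Uniqueness

variable {ι K : Type*} [Field K] {m z z' : ι → K}

theorem eq_of_offDiag_mul_eq (h : ∀ i j, i ≠ j → z' i * z' j = z i * z j) {a : ι}
    (ha : z a ≠ 0) (ha' : z' a = z a) : z' = z := by
  funext i
  rcases eq_or_ne i a with rfl | hia
  · exact ha'
  · exact mul_right_cancel₀ ha (by rw [← h i a hia, ha'])

variable [Fintype ι]

theorem sq_eq_sq_of_offDiag_mul_eq (hm : ∀ i, m i ≠ 0) (hz : ∑ i, m i * z i = 0)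
    (hz' : ∑ i, m i * z' i = 0) (h : ∀ i j, i ≠ j → z' i * z' j = z i * z j) (a : ι) :
    z' a ^ 2 = z a ^ 2 := by
  classical
  have hsplit : ∀ w : ι → K, ∑ i, m i * w i = 0 →
      m a * w a ^ 2 = -∑ i ∈ Finset.univ.erase a, w a * (m i * w i) := fun w hw => by
    have := congrArg (w a * ·) hw
    simp only [mul_zero, Finset.mul_sum] at this
    rw [← Finset.add_sum_erase _ _ (Finset.mem_univ a)] at this
    linear_combination this
  have hoff : ∑ i ∈ Finset.univ.erase a, z' a * (m i * z' i)
      = ∑ i ∈ Finset.univ.erase a, z a * (m i * z i) :=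
    Finset.sum_congr rfl fun i hi => by
      rw [mul_left_comm, h a i (Finset.ne_of_mem_erase hi).symm, mul_left_comm]
  exact mul_left_cancel₀ (hm a) (by rw [hsplit z' hz', hsplit z hz, hoff])

theorem eq_or_eq_neg_of_offDiag_mul_eq (hm : ∀ i, m i ≠ 0) (hz : ∑ i, m i * z i = 0)
    (hz' : ∑ i, m i * z' i = 0) (h : ∀ i j, i ≠ j → z' i * z' j = z i * z j) :
    z' = z ∨ z' = -z := by
  have hsq := sq_eq_sq_of_offDiag_mul_eq hm hz hz' h
  by_cases hz0 : z = 0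
  · left
    funext a
    simpa [hz0] using hsq a
  obtain ⟨a, ha⟩ := Function.ne_iff.mp hz0
  rcases sq_eq_sq_iff_eq_or_eq_neg.mp (hsq a) with ha' | ha'
  · exact Or.inl (eq_of_offDiag_mul_eq h ha ha')
  · refine Or.inr (neg_eq_iff_eq_neg.mp (eq_of_offDiag_mul_eq (fun i j hij => ?_) ha ?_))
    · simpa using h i j hij
    · simp [ha']

end Uniqueness

theorem exists_ne_ne_zero_of_sum_eq_zero {ι M : Type*} [Fintype ι] [AddCommMonoid M]
    {f : ι → M} (hf : f ≠ 0) (hsum : ∑ i, f i = 0) : ∃ i j, i ≠ j ∧ f i ≠ 0 ∧ f j ≠ 0 := by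
  obtain ⟨i, hi⟩ := Function.ne_iff.mp hf
  by_contra! hcon
  exact hi <|
    (Finset.sum_eq_single i (fun j _ hji => hcon i j hji.symm hi) (by simp)).symm.trans hsum

theorem Complex.exists_sq_eq_ofReal (β : ℝ) : ∃ s : ℂ, s ^ 2 = β ∧ (s.im = 0 ∨ s.re = 0) := by
  rcases le_or_gt 0 β with hβ | hβ
  · exact ⟨√β, by rw [← ofReal_pow, Real.sq_sqrt hβ], Or.inl (ofReal_im _)⟩
  · refine ⟨I * √(-β), ?_, Or.inr (by simp)⟩
    rw [mul_pow, I_sq, ← ofReal_pow, Real.sq_sqrt (by linarith)]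
    push_cast
    ring

section DziobekEquations

variable {ι X : Type*} [Fintype ι] [LinearOrder ι] [PseudoMetricSpace X]

/-- Equations (i) and (iii) in the unknowns `z`, `Δ0`. -/
def IsDziobekSolution (c2 : ℤ) (m : ι → ℝ) (x : ι → X) (z : ι → ℂ) (Δ0 : ℂ) : Prop :=
  (∀ i j, i < j → (dist (x i) (x j) : ℂ) ^ c2 - 1 - z i * z j = 0) ∧
    ∑ j, (m j : ℂ) * z j = 0 ∧
    ∀ l, Δ0 + ∑ j, (m j : ℂ) * z j * (dist (x j) (x l) : ℂ) ^ 2 = 0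

variable {c2 : ℤ} {m : ι → ℝ} {x : ι → X} {z z' : ι → ℂ} {Δ0 Δ0' : ℂ}

theorem IsDziobekSolution.mul_eq (h : IsDziobekSolution c2 m x z Δ0) {i j : ι} (hij : i ≠ j) :
    z i * z j = (dist (x i) (x j) : ℂ) ^ c2 - 1 := by
  rcases hij.lt_or_gt with hlt | hgt
  · linear_combination -h.1 i j hlt
  · rw [dist_comm]
    linear_combination -h.1 j i hgt

theorem IsDziobekSolution.eq_or_eq_neg [Nonempty ι] (hm : ∀ i, m i ≠ 0)
    (h : IsDziobekSolution c2 m x z Δ0) (h' : IsDziobekSolution c2 m x z' Δ0') :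
    (z' = z ∧ Δ0' = Δ0) ∨ (z' = -z ∧ Δ0' = -Δ0) := by
  obtain ⟨l⟩ := ‹Nonempty ι›
  rcases eq_or_eq_neg_of_offDiag_mul_eq (fun i => Complex.ofReal_ne_zero.mpr (hm i)) h.2.1 h'.2.1
    (fun i j hij => by rw [h.mul_eq hij, h'.mul_eq hij]) with rfl | rfl
  · exact Or.inl ⟨rfl, by linear_combination h'.2.2 l - h.2.2 l⟩
  · have hl := h'.2.2 l
    simp only [Pi.neg_apply, mul_neg, neg_mul, Finset.sum_neg_distrib] at hl
    exact Or.inr ⟨rfl, by linear_combination hl + h.2.2 l⟩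

end DziobekEquations

theorem isDziobekSolution_of_offDiag_eq_mul_mul {ι E : Type*} [Fintype ι] [LinearOrder ι]
    [NormedAddCommGroup E] [InnerProductSpace ℝ E] {c2 : ℤ} {m : ι → ℝ} {x : ι → E}
    {Δ : ι → ℝ} {β : ℝ} (hm : ∀ i, m i ≠ 0) (hΔ : Δ ∈ affineDependencies ℝ x)
    (hβ : ∀ i j, i ≠ j → m i * m j * (dist (x i) (x j) ^ c2 - 1) = β * Δ i * Δ j)
    {s : ℂ} (hs : s ^ 2 = β) :
    IsDziobekSolution c2 m x (fun i => s * (Δ i / m i : ℝ)) (s * (-∑ j, Δ j * ‖x j‖ ^ 2 : ℝ)) := by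
  have hmz : ∀ j, (m j : ℂ) * (s * (Δ j / m j : ℝ)) = s * Δ j := fun j => by
    have := Complex.ofReal_ne_zero.mpr (hm j)
    push_cast
    field_simp
  refine ⟨fun i j hij => ?_, ?_, fun l => ?_⟩
  · have hr : dist (x i) (x j) ^ c2 - 1 = β * (Δ i / m i) * (Δ j / m j) := by
      field_simp [hm i, hm j]
      linear_combination hβ i j hij.ne
    have hrC := congrArg Complex.ofReal hr
    push_cast at hrC
    rw [← hs] at hrC
    push_cast
    linear_combination hrC
  · simp only [hmz, ← Finset.mul_sum]
    exact_mod_cast mul_eq_zero_of_right _ (by exact_mod_cast (mem_affineDependencies.mp hΔ).1)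
  · have hrow := congrArg Complex.ofReal (sum_mul_dist_sq_eq hΔ l)
    push_cast at hrow
    simp only [hmz, mul_assoc, ← Finset.mul_sum, hrow]
    push_cast
    ring

theorem statement8_general {n : ℕ} (hn : 3 ≤ n) (c2 : ℤ) (hc2 : c2 ≠ 0)
    (x : Fin n → EuclideanSpace ℝ (Fin (n - 2)))
    (m : Fin n → ℝ) (hm : ∀ i, 0 < m i)
    (hcc : IsCentralConfig c2 m (∑ i, m i) x)
    (hdim : confDim x = n - 2) :
    ∃ z : Fin n → ℂ, ∃ Δ0 : ℂ,
      (((∀ i, (z i).im = 0) ∧ Δ0.im = 0) ∨ ((∀ i, (z i).re = 0) ∧ Δ0.re = 0)) ∧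
      (∃ i j : Fin n, i ≠ j ∧ z i ≠ 0 ∧ z j ≠ 0) ∧
      (∀ i j : Fin n, i < j → (dist (x i) (x j) : ℂ) ^ c2 - 1 - z i * z j = 0) ∧
      (cayleyMenger x).det = 0 ∧
      (∑ j, (m j : ℂ) * z j = 0) ∧
      (∀ l : Fin n, Δ0 + ∑ j, (m j : ℂ) * z j * (dist (x j) (x l) : ℂ) ^ 2 = 0) ∧
      (∀ (z' : Fin n → ℂ) (Δ0' : ℂ),
        (∀ i j : Fin n, i < j → (dist (x i) (x j) : ℂ) ^ c2 - 1 - z' i * z' j = 0) →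
        (∑ j, (m j : ℂ) * z' j = 0) →
        (∀ l : Fin n, Δ0' + ∑ j, (m j : ℂ) * z' j * (dist (x j) (x l) : ℂ) ^ 2 = 0) →
        ((z' = z ∧ Δ0' = Δ0) ∨ (z' = -z ∧ Δ0' = -Δ0))) := by
  have : Nonempty (Fin n) := ⟨⟨0, by omega⟩⟩
  have hm0 : ∀ i, m i ≠ 0 := fun i => (hm i).ne'
  have hM : ∑ i, m i ≠ 0 := (Finset.sum_pos (fun i _ => hm i) Finset.univ_nonempty).ne'
  obtain ⟨Δ, hΔ0, hspan⟩ := exists_affineDependencies_eq_span_singleton (k := ℝ) (x := x) <| by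
    rw [confDim, direction_affineSpan] at hdim
    simp only [hdim, Fintype.card_fin]
    omega
  have hΔ : Δ ∈ affineDependencies ℝ x := hspan ▸ Submodule.mem_span_singleton_self Δ
  obtain ⟨β, hβ⟩ := hcc.exists_offDiag_eq_mul_mul hM hΔ0 hspan
  obtain ⟨s, hs, hs_re_im⟩ := Complex.exists_sq_eq_ofReal β
  have hβ0 := ne_zero_of_offDiag_eq_mul_mul hc2 hm0 hΔ hΔ0 hβ
  have hs0 : s ≠ 0 := by
    rintro rfl
    exact hβ0 (Complex.ofReal_eq_zero.mp (by rw [← hs]; simp))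
  have hsol := isDziobekSolution_of_offDiag_eq_mul_mul hm0 hΔ hβ hs
  obtain ⟨i, j, hij, hi, hj⟩ :=
    exists_ne_ne_zero_of_sum_eq_zero hΔ0 (mem_affineDependencies.mp hΔ).1
  refine ⟨_, _, ?_, ⟨i, j, hij, ?_, ?_⟩, hsol.1, cayleyMenger_det_eq_zero hΔ hΔ0, hsol.2.1,
    hsol.2.2, fun z' Δ0' h₁ h₂ h₃ => hsol.eq_or_eq_neg hm0 ⟨h₁, h₂, h₃⟩⟩
  · rcases hs_re_im with h | h <;>
      simp only [Complex.re_mul_ofReal, Complex.im_mul_ofReal, h, zero_mul, implies_true, and_self,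
        true_or, or_true]
  · exact mul_ne_zero hs0 (by exact_mod_cast div_ne_zero hi (hm0 i))
  · exact mul_ne_zero hs0 (by exact_mod_cast div_ne_zero hj (hm0 j))

/-- Let `a` be a nonzero semi-integer (`c2 = 2a ∈ ℤ \ {0}`) and let `x`
be an `(n−2)`-dimensional central configuration for `U_a` with positive masses,
normalized so that `λ = M` (i.e. `λ/M = 1`). Then there exist complex numbers
`z_1, …, z_n, Δ_0`, all real or all purely imaginary, with at least two `z_i` nonzero,
satisfying (i) `r_{ij}^{2a} − 1 − z_i z_j = 0` for `i < j`; (ii) `det A(x) = 0`;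
(iii) `∑ m_j z_j = 0` and `Δ_0 + ∑_j m_j z_j r_{jl}² = 0` for every `l`. Moreover the
tuple `(z, Δ_0)` is unique up to an overall sign. -/
theorem statement8 {n : ℕ} (hn : 3 ≤ n) (c2 : ℤ) (hc2 : c2 ≠ 0)
    (x : Fin n → EuclideanSpace ℝ (Fin (n - 2))) (hinj : Function.Injective x)
    (m : Fin n → ℝ) (hm : ∀ i, 0 < m i)
    (hcc : IsCentralConfig c2 m (∑ i, m i) x)
    (hdim : confDim x = n - 2) :
    ∃ z : Fin n → ℂ, ∃ Δ0 : ℂ,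
      (((∀ i, (z i).im = 0) ∧ Δ0.im = 0) ∨ ((∀ i, (z i).re = 0) ∧ Δ0.re = 0)) ∧
      (∃ i j : Fin n, i ≠ j ∧ z i ≠ 0 ∧ z j ≠ 0) ∧
      (∀ i j : Fin n, i < j → (dist (x i) (x j) : ℂ) ^ c2 - 1 - z i * z j = 0) ∧
      (cayleyMenger x).det = 0 ∧
      (∑ j, (m j : ℂ) * z j = 0) ∧
      (∀ l : Fin n, Δ0 + ∑ j, (m j : ℂ) * z j * (dist (x j) (x l) : ℂ) ^ 2 = 0) ∧
      (∀ (z' : Fin n → ℂ) (Δ0' : ℂ),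
        (∀ i j : Fin n, i < j → (dist (x i) (x j) : ℂ) ^ c2 - 1 - z' i * z' j = 0) →
        (∑ j, (m j : ℂ) * z' j = 0) →
        (∀ l : Fin n, Δ0' + ∑ j, (m j : ℂ) * z' j * (dist (x j) (x l) : ℂ) ^ 2 = 0) →
        ((z' = z ∧ Δ0' = Δ0) ∨ (z' = -z ∧ Δ0' = -Δ0))) :=
  statement8_general hn c2 hc2 x m hm hcc hdim
end

section
/- Let P = (r, z, Δ_0, m) ∈ ℂ^{q+2n+1} be a point such that z_1 = ⋯ = z_t = 0 for some 1 ≤ t ≤ n, z_{t+1}, …, z_n are all nonzero, and the Cayley–Menger matrix A(r²) of the numbers r_{ij}² has rank n. Then the rank ρ of the (n+1) × (n+1) Jacobian matrix of Γ_0, Γ_1, …, Γ_n with respect to the variables Δ, M_1, …, M_n evaluated at P satisfies n − t ≤ ρ ≤ n − t + 1; in particular this matrix has a nonsingular square submatrix of order n − t or n − t + 1. -/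
/-- Index type for the mutual-distance coordinates `r_{ij}`, `1 ≤ i < j ≤ n`. -/
abbrev PairIdx (n : ℕ) := {p : Fin n × Fin n // p.1 < p.2}

/-- `r_{ij}` as a symmetric function of the coordinates indexed by ordered pairs
(`r_{ll} = 0`). -/
noncomputable def rC {n : ℕ} (r : PairIdx n → ℂ) (i j : Fin n) : ℂ :=
  if h : i < j then r ⟨(i, j), h⟩ else if h' : j < i then r ⟨(j, i), h'⟩ else 0

/-- The Cayley–Menger matrix `A(r²)` of the numbers `r_{ij}`. -/
noncomputable def cmOf {n : ℕ} (r : PairIdx n → ℂ) :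
    Matrix (Fin (n + 1)) (Fin (n + 1)) ℂ :=
  Matrix.of fun i j =>
    Fin.cases (Fin.cases 0 (fun _ => 1) j)
      (fun i' => Fin.cases 1 (fun j' => rC r i' j' ^ 2) j) i

/-- The Jacobian matrix of `Γ_0, Γ_1, …, Γ_n` with respect to `Δ, M_1, …, M_n`:
the row for `Γ_0` is `(0, z_1, …, z_n)` and the row for `Γ_l` is
`(1, z_1 r_{1l}², …, z_n r_{nl}²)`. -/
noncomputable def gammaJac {n : ℕ} (r : PairIdx n → ℂ) (z : Fin n → ℂ) :
    Matrix (Fin (n + 1)) (Fin (n + 1)) ℂ :=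
  Matrix.of fun l j =>
    Fin.cases (Fin.cases 0 (fun j' => z j') j)
      (fun l' => Fin.cases 1 (fun j' => z j' * rC r j' l' ^ 2) j) l

/-! The Jacobian factors as `A(r²) · diag(1, z)`, and `diag(1, z)` has rank `n − t + 1`.
A product has rank at most that of either factor, which gives the upper bound, while Sylvester's
inequality `rank A + rank D ≤ rank (A D) + (n + 1)` with `rank A(r²) = n` gives the lower bound.
A matrix of rank `ρ` has a nonsingular `ρ × ρ` submatrix. -/

open Matrix Module

namespace LinearMap

variable {K U V W : Type*} [Field K] [AddCommGroup U] [Module K U] [AddCommGroup V] [Module K V]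
  [AddCommGroup W] [Module K W]

theorem finrank_range_add_finrank_range_le [FiniteDimensional K V] (f : V →ₗ[K] W)
    (g : U →ₗ[K] V) :
    finrank K (range f) + finrank K (range g) ≤ finrank K (range (f ∘ₗ g)) + finrank K V := by
  set p := range g
  have hrange : range (f ∘ₗ g) = range (f.domRestrict p) := by
    rw [range_comp, range_domRestrict]
  have hker : finrank K (ker (f.domRestrict p)) ≤ finrank K (ker f) := by
    rw [ker_domRestrict, ← Submodule.finrank_map_subtype_eq]
    exact Submodule.finrank_mono (Submodule.map_comap_le _ _)
  have h₁ := (f.domRestrict p).finrank_range_add_finrank_ker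
  have h₂ := f.finrank_range_add_finrank_ker
  rw [hrange]
  omega

end LinearMap

theorem Matrix.rank_add_rank_le_rank_mul_add_card {K m n o : Type*} [Field K] [Fintype n]
    [Fintype o] (A : Matrix m n K) (B : Matrix n o K) :
    A.rank + B.rank ≤ (A * B).rank + Fintype.card n := by
  have hsylvester := A.mulVecLin.finrank_range_add_finrank_range_le B.mulVecLin
  rwa [finrank_fintype_fun_eq_card, ← mulVecLin_mul] at hsylvester

theorem exists_injective_linearIndependent_of_finrank_span {K V ι : Type*} [Field K]
    [AddCommGroup V] [Module K V] [Finite ι] (v : ι → V) {r : ℕ}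
    (hr : finrank K (Submodule.span K (Set.range v)) = r) :
    ∃ a : Fin r → ι, Function.Injective a ∧ LinearIndependent K (v ∘ a) := by
  obtain ⟨κ, a, ha, hspan, hli⟩ := exists_linearIndependent' K v
  have : Finite κ := Finite.of_injective a ha
  have : Fintype κ := Fintype.ofFinite κ
  have hκ : Fintype.card κ = r := by rw [← finrank_span_eq_card hli, hspan, hr]
  let e : Fin r ≃ κ := (Fintype.equivFinOfCardEq hκ).symm
  exact ⟨a ∘ e, ha.comp e.injective, hli.comp e e.injective⟩

theorem Matrix.exists_submatrix_det_ne_zero_of_rank {K m n : Type*} [Field K] [Fintype m]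
    [Fintype n] (M : Matrix m n K) :
    ∃ (e : Fin M.rank → m) (f : Fin M.rank → n), Function.Injective e ∧ Function.Injective f ∧
      (M.submatrix e f).det ≠ 0 := by
  obtain ⟨f, hf, hcols⟩ :=
    exists_injective_linearIndependent_of_finrank_span Mᵀ (M.rank_eq_finrank_span_cols).symm
  have hrank : (M.submatrix id f).rank = M.rank := by
    rw [← rank_transpose]
    exact (LinearIndependent.rank_matrix (M := (M.submatrix id f)ᵀ) hcols).trans
      (Fintype.card_fin _)
  obtain ⟨e, he, hrows⟩ := exists_injective_linearIndependent_of_finrank_span (M.submatrix id f)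
    ((M.submatrix id f).rank_eq_finrank_span_row.symm.trans hrank)
  refine ⟨e, f, he, hf, ?_⟩
  classical
  exact ((isUnit_iff_isUnit_det _).mp (linearIndependent_rows_iff_isUnit.mp hrows)).ne_zero

theorem Matrix.rank_diagonal_cons {K : Type*} [Field K] [DecidableEq K] {n : ℕ} {a : K}
    (ha : a ≠ 0) (w : Fin n → K) :
    (diagonal (Fin.cons a w : Fin (n + 1) → K)).rank = Fintype.card {i // w i ≠ 0} + 1 := by
  rw [rank_diagonal, Fintype.card_subtype, Fintype.card_subtype, Fin.card_filter_univ_succ]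
  simp [ha]

theorem rC_symm {n : ℕ} (r : PairIdx n → ℂ) (i j : Fin n) : rC r i j = rC r j i := by
  unfold rC
  rcases lt_trichotomy i j with h | rfl | h
  · rw [dif_pos h, dif_neg (asymm h), dif_pos h]
  · rfl
  · rw [dif_neg (asymm h), dif_pos h, dif_pos h]

theorem gammaJac_eq_cmOf_mul_diagonal {n : ℕ} (r : PairIdx n → ℂ) (z : Fin n → ℂ) :
    gammaJac r z = cmOf r * diagonal (Fin.cons 1 z) := by
  ext l j
  rw [mul_diagonal]
  cases l using Fin.cases <;> cases j using Fin.cases <;>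
    simp [gammaJac, cmOf, rC_symm r, mul_comm]

theorem Fin.card_subtype_le_val (n t : ℕ) : Fintype.card {i : Fin n // t ≤ (i : ℕ)} = n - t := by
  have hlt := Fin.card_filter_val_lt (n := n) (m := t)
  have hsum :=
    Finset.card_filter_add_card_filter_not (s := Finset.univ) (fun i : Fin n => (i : ℕ) < t)
  simp only [not_lt, Finset.card_univ, Fintype.card_fin] at hsum
  rw [Fintype.card_subtype]
  omega

theorem statement14_general {n t : ℕ}
    (r : PairIdx n → ℂ) (z : Fin n → ℂ)
    (hz0 : ∀ i : Fin n, (i : ℕ) < t → z i = 0)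
    (hz1 : ∀ i : Fin n, t ≤ (i : ℕ) → z i ≠ 0)
    (hrank : (cmOf r).rank = n) :
    (n - t ≤ (gammaJac r z).rank ∧ (gammaJac r z).rank ≤ n - t + 1) ∧
    ∃ u : ℕ, (u = n - t ∨ u = n - t + 1) ∧
      ∃ (e f : Fin u → Fin (n + 1)),
        Function.Injective e ∧ Function.Injective f ∧
        ((gammaJac r z).submatrix e f).det ≠ 0 := by
  classical
  have hsupport : Fintype.card {i // z i ≠ 0} = n - t := by
    rw [← Fin.card_subtype_le_val n t]
    exact Fintype.card_congr <| Equiv.subtypeEquivRight fun i =>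
      ⟨fun hi => not_lt.mp (mt (hz0 i) hi), hz1 i⟩
  have hD : (diagonal (Fin.cons 1 z)).rank = n - t + 1 := by
    rw [rank_diagonal_cons one_ne_zero, hsupport]
  have hJ := gammaJac_eq_cmOf_mul_diagonal r z
  have hupper : (gammaJac r z).rank ≤ n - t + 1 := hD ▸ hJ ▸ rank_mul_le_right _ _
  have hlower : n - t ≤ (gammaJac r z).rank := by
    have hsylvester := (cmOf r).rank_add_rank_le_rank_mul_add_card (diagonal (Fin.cons 1 z))
    rw [← hJ, hrank, hD, Fintype.card_fin] at hsylvester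
    omega
  exact ⟨⟨hlower, hupper⟩, _, by omega, (gammaJac r z).exists_submatrix_det_ne_zero_of_rank⟩

/-- Let `P = (r, z, Δ_0, m)` be a point with `z_1 = ⋯ = z_t = 0`
(`1 ≤ t ≤ n`), `z_{t+1}, …, z_n` all nonzero, and such that the Cayley–Menger matrix
`A(r²)` has rank `n`. Then the rank `ρ` of the Jacobian matrix of `Γ_0, …, Γ_n` with
respect to `Δ, M_1, …, M_n` at `P` satisfies `n − t ≤ ρ ≤ n − t + 1`; in particular this
matrix has a nonsingular square submatrix of order `n − t` or `n − t + 1`. -/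
theorem statement14 {n t : ℕ} (hn : 3 ≤ n) (ht1 : 1 ≤ t) (ht2 : t ≤ n)
    (r : PairIdx n → ℂ) (z : Fin n → ℂ) (Δ0 : ℂ) (m : Fin n → ℂ)
    (hz0 : ∀ i : Fin n, (i : ℕ) < t → z i = 0)
    (hz1 : ∀ i : Fin n, t ≤ (i : ℕ) → z i ≠ 0)
    (hrank : (cmOf r).rank = n) :
    (n - t ≤ (gammaJac r z).rank ∧ (gammaJac r z).rank ≤ n - t + 1) ∧
    ∃ u : ℕ, (u = n - t ∨ u = n - t + 1) ∧
      ∃ (e f : Fin u → Fin (n + 1)),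
        Function.Injective e ∧ Function.Injective f ∧
        ((gammaJac r z).submatrix e f).det ≠ 0 :=
  statement14_general r z hz0 hz1 hrank
end
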